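/- For every integer s ≥ 2 and every positive integer k, there exist two distinct binary strings of length (5s−2)·2^{k−1} − 5s + 4 that have the same s-gapped k-deck; that is, G_s(k) ≤ (5s−2)·2^{k−1} − 5s + 4, where G_s(k) is the smallest positive integer n such that there exist two distinct binary strings of length n with the same s-gapped k-deck. -/

import Mathlib

/-- The multiset of all `s`-gapped subsequences of a binary string (all lengths,
including the empty subsequence), counted with multiplicity over index choices:
consecutive chosen indices must differ by at least `s`. -/
def gappedSubseqs (s : ℕ) : List Bool → Multiset (List Bool)
  | [] => {[]}
  | a :: l => gappedSubseqs s l + (gappedSubseqs s (l.drop (s - 1))).map (a :: ·)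
termination_by x => x.length
decreasing_by
  · simp
  · simp only [List.length_drop, List.length_cons]; omega

/-- The `s`-gapped `k`-deck: all `s`-gapped subsequences of length between 1 and `k`. -/
def gDeck (s k : ℕ) (x : List Bool) : Multiset (List Bool) :=
  (gappedSubseqs s x).filter (fun w => 1 ≤ w.length ∧ w.length ≤ k)

/-- The exact `s`-gapped `k`-deck: all `s`-gapped subsequences of length exactly `k`. -/
def dDeck (s k : ℕ) (x : List Bool) : Multiset (List Bool) :=
  (gappedSubseqs s x).filter (fun w => w.length = k)

/-- The classical (ungapped) `k`-deck: the multiset of all length-`k` subsequences. -/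
def deck (k : ℕ) (x : List Bool) : Multiset (List Bool) :=
  (gappedSubseqs 1 x).filter (fun w => w.length = k)

/-- The gapped `k`-deck `B^(k)` (gap `2`). -/
def Bdeck (k : ℕ) (x : List Bool) : Multiset (List Bool) := gDeck 2 k x

/-- `B_L^(k)`: the gapped `k`-deck of the string punctured on the left. -/
def BLdeck (k : ℕ) (x : List Bool) : Multiset (List Bool) := Bdeck k x.tail

/-- `B_R^(k)`: the gapped `k`-deck of the string punctured on the right. -/
def BRdeck (k : ℕ) (x : List Bool) : Multiset (List Bool) := Bdeck k x.dropLast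

/-- `B_LR^(k)`: the gapped `k`-deck of the string punctured on both ends. -/
def BLRdeck (k : ℕ) (x : List Bool) : Multiset (List Bool) := Bdeck k x.tail.dropLast

/-- `S(k)`: the smallest positive `n` such that two distinct binary strings of
length `n` share the same `k`-deck. -/
noncomputable def Sval (k : ℕ) : ℕ :=
  sInf {n | 0 < n ∧ ∃ x y : List Bool, x.length = n ∧ y.length = n ∧ x ≠ y ∧
    deck k x = deck k y}

/-- `G(k)`: the smallest positive `n` such that two distinct binary strings of
length `n` share the same gapped `k`-deck. -/
noncomputable def Gval (k : ℕ) : ℕ :=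
  sInf {n | 0 < n ∧ ∃ x y : List Bool, x.length = n ∧ y.length = n ∧ x ≠ y ∧
    Bdeck k x = Bdeck k y}

/-- `G_s(k)`: the smallest positive `n` such that two distinct binary strings of
length `n` share the same `s`-gapped `k`-deck. -/
noncomputable def Gs (s k : ℕ) : ℕ :=
  sInf {n | 0 < n ∧ ∃ x y : List Bool, x.length = n ∧ y.length = n ∧ x ≠ y ∧
    gDeck s k x = gDeck s k y}

/-- `G*(k)`: the smallest positive `n` such that two distinct binary strings of
length `n` share the same gapped `k`-deck, also after puncturing on the left,
right and both sides. -/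
noncomputable def Gstar (k : ℕ) : ℕ :=
  sInf {n | 0 < n ∧ ∃ x y : List Bool, x.length = n ∧ y.length = n ∧ x ≠ y ∧
    Bdeck k x = Bdeck k y ∧ BLdeck k x = BLdeck k y ∧
    BRdeck k x = BRdeck k y ∧ BLRdeck k x = BLRdeck k y}

mutual
/-- Morse-Thue string `x^(k+1)` (index shifted: `mtX 0 = x^(1) = (0,1)`). -/
def mtX : ℕ → List Bool
  | 0 => [false, true]
  | k + 1 => mtX k ++ mtY k
/-- Morse-Thue string `y^(k+1)` (index shifted: `mtY 0 = y^(1) = (1,0)`). -/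
def mtY : ℕ → List Bool
  | 0 => [true, false]
  | k + 1 => mtY k ++ mtX k
end

mutual
/-- Padded Morse-Thue string `x^(k+1)` (index shifted: `px 0 = x^(1) = (0,0,1,0)`). -/
def px : ℕ → List Bool
  | 0 => [false, false, true, false]
  | k + 1 => [false] ++ px k ++ [false, false] ++ py k ++ [false]
/-- Padded Morse-Thue string `y^(k+1)` (index shifted: `py 0 = y^(1) = (0,1,0,0)`). -/
def py : ℕ → List Bool
  | 0 => [false, true, false, false]
  | k + 1 => [false] ++ py k ++ [false, false] ++ px k ++ [false]
end

/-- Interleaving `(z₁,x₁,z₂,x₂,…,z_{k-1},x_{k-1},z_k)` of `z` and `x`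
(used with `|z| = |x| + 1`). -/
def interleave : List Bool → List Bool → List Bool
  | z, [] => z
  | [], _ :: _ => []
  | a :: l, b :: m => a :: b :: interleave l m

/-- `N(w, p)`: the number of occurrences of the wildcard string `w`
(entries `none` are wildcards `J`, `some b` is a letter of `Γ = {X, Y}`)
as a subsequence of `p`, each wildcard matching either letter. -/
def Nw : List (Option Bool) → List Bool → ℕ
  | [], _ => 1
  | _ :: _, [] => 0
  | a :: w, b :: p =>
      Nw (a :: w) p + if a = none ∨ a = some b then Nw w p else 0

/-- `U_r(k)`: wildcard strings of length between `r` and `k` with exactly `r`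
non-wildcard symbols. -/
def Ur (r k : ℕ) : Set (List (Option Bool)) :=
  {w | r ≤ w.length ∧ w.length ≤ k ∧ w.countP (fun a => a.isSome) = r}

/-- `U(k₁, k₂) = U₁(k₁) ∪ U₂(k₂)`. -/
def Uset (k1 k2 : ℕ) : Set (List (Option Bool)) := Ur 1 k1 ∪ Ur 2 k2

/-- `p ∼^{U(k₁,k₂)} q`: `N(w,p) = N(w,q)` for all `w ∈ U(k₁,k₂)`. -/
def equivU (k1 k2 : ℕ) (p q : List Bool) : Prop :=
  ∀ w ∈ Uset k1 k2, Nw w p = Nw w q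

/-- `S_U(k₁,k₂)`: the smallest `m` for which two distinct strings
`p, q ∈ Γ^m` satisfy `p ∼^{U(k₁,k₂)} q`. -/
noncomputable def SU (k1 k2 : ℕ) : ℕ :=
  sInf {m | ∃ p q : List Bool, p.length = m ∧ q.length = m ∧ p ≠ q ∧
    equivU k1 k2 p q}

/-- `h_{x,y}(p)`: replace each letter of `p` (`false = X`, `true = Y`) by `x`
resp. `y` padded with one `0` at each end. -/
def hxy (x y : List Bool) (p : List Bool) : List Bool :=
  (p.map (fun b => [false] ++ (if b then y else x) ++ [false])).flatten


/-! ### Auxiliary development for Statement 10 -/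

/-- Number of `s`-gapped occurrences of the word `w` in the string `x`. -/
def Nocc (s : ℕ) : List Bool → List Bool → ℕ
  | [], _ => 1
  | _ :: _, [] => 0
  | b :: w, a :: l => Nocc s (b :: w) l + if b = a then Nocc s w (l.drop (s-1)) else 0
termination_by _ x => x.length
decreasing_by
  · simp
  · simp only [List.length_drop, List.length_cons]; omega

@[simp] lemma Nocc_nil (s : ℕ) (x : List Bool) : Nocc s [] x = 1 := by
  cases x <;> simp [Nocc]

@[simp] lemma Nocc_cons_nil (s : ℕ) (b : Bool) (w : List Bool) : Nocc s (b :: w) [] = 0 := by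
  simp [Nocc]

lemma Nocc_cons (s : ℕ) (b a : Bool) (w l : List Bool) :
    Nocc s (b :: w) (a :: l) = Nocc s (b :: w) l + if b = a then Nocc s w (l.drop (s-1)) else 0 := by
  rw [Nocc]

lemma count_gapped (s : ℕ) : ∀ n (x : List Bool), x.length ≤ n → ∀ w,
    (gappedSubseqs s x).count w = Nocc s w x := by
  intro n
  induction n with
  | zero =>
    intro x hx w
    rw [List.length_eq_zero_iff.mp (Nat.le_zero.mp hx)]
    rw [gappedSubseqs]
    cases w <;> simp
  | succ n ih =>
    intro x hx w
    cases x with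
    | nil => rw [gappedSubseqs]; cases w <;> simp
    | cons a l =>
      rw [gappedSubseqs]
      simp only [Multiset.count_add]
      have hl : l.length ≤ n := by simpa using hx
      have hd : (l.drop (s-1)).length ≤ n := le_trans (by simp) hl
      cases w with
      | nil =>
        rw [ih l hl]
        simp only [Nocc_nil]
        have : ((gappedSubseqs s (l.drop (s-1))).map (a :: ·)).count [] = 0 := by
          rw [Multiset.count_eq_zero]
          intro h
          obtain ⟨b, _, hb⟩ := Multiset.mem_map.mp h
          exact List.cons_ne_nil a b hb
        omega
      | cons b w' =>
        rw [Nocc_cons, ih l hl]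
        congr 1
        by_cases hba : b = a
        · subst hba
          simp only [if_pos rfl]
          rw [← ih _ hd w']
          exact Multiset.count_map_eq_count' _ _ (fun x y h => by simpa using h) w'
        · rw [if_neg hba, Multiset.count_eq_zero]
          intro h
          obtain ⟨c, _, hc⟩ := Multiset.mem_map.mp h
          injection hc with h1 h2
          exact hba h1.symm

lemma Nocc_snoc (s : ℕ) (hs : 1 ≤ s) : ∀ n (z : List Bool), z.length ≤ n →
    ∀ (w : List Bool) (a : Bool),
    Nocc s w (z ++ [a]) = Nocc s w z +
      (if w.getLast? = some a then Nocc s w.dropLast (z.take (z.length + 1 - s)) else 0) := by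
  intro n
  induction n with
  | zero =>
    intro z hz w a
    rw [List.length_eq_zero_iff.mp (Nat.le_zero.mp hz)]
    cases w with
    | nil => simp
    | cons b w' =>
      simp only [List.nil_append, Nocc_cons, Nocc_cons_nil, List.drop_nil, List.length_nil,
        List.take_nil, Nat.zero_add]
      cases w' with
      | nil => simp [List.getLast?]
      | cons d w'' =>
        have h1 : Nocc s (d :: w'') [] = 0 := Nocc_cons_nil s d w''
        have h2 : (b :: d :: w'').dropLast = b :: (d :: w'').dropLast := by simp
        rw [h1, h2]
        simp only [Nocc_cons_nil]
        split <;> simp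
  | succ n ih =>
    intro z hz w a
    cases z with
    | nil => exact ih [] (by simp) w a
    | cons c z' =>
      cases w with
      | nil => simp
      | cons b w' =>
        have hz' : z'.length ≤ n := by simpa using hz
        simp only [List.cons_append, Nocc_cons]
        rw [ih z' hz' (b :: w') a]
        by_cases hcase : s - 1 ≤ z'.length
        · have hdrop : (z' ++ [a]).drop (s-1) = z'.drop (s-1) ++ [a] :=
            List.drop_append_of_le_length hcase
          rw [hdrop]
          rw [ih (z'.drop (s-1)) (le_trans (by simp) hz') w' a]
          have htake1 : (c :: z').take (z'.length + 1 + 1 - s) = c :: z'.take (z'.length + 1 - s) := by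
            have : z'.length + 1 + 1 - s = (z'.length + 1 - s) + 1 := by omega
            rw [this, List.take_succ_cons]
          have htake2 : List.take (z'.length - (s - 1) + 1 - s) (List.drop (s - 1) z')
              = List.drop (s - 1) (List.take (z'.length + 1 - s) z') := by
            rw [List.drop_take]
            congr 1
            omega
          rw [List.length_cons, htake1]
          cases w' with
          | nil =>
            simp only [List.getLast?_singleton, List.dropLast_singleton, Nocc_nil, List.getLast?_nil]
            split <;> split <;> simp
          | cons d w'' =>
            have hlast : (b :: d :: w'').getLast? = (d :: w'').getLast? := by
              simp [List.getLast?_cons_cons]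
            have hdl : (b :: d :: w'').dropLast = b :: (d :: w'').dropLast := by simp
            rw [hlast, hdl, Nocc_cons]
            by_cases hba : b = c <;> by_cases hl : (d :: w'').getLast? = some a <;>
              simp [hba, hl, htake2] <;> omega
        · push_neg at hcase
          have hdrop : (z' ++ [a]).drop (s-1) = [] := by
            apply List.drop_eq_nil_of_le
            simp; omega
          have hd2 : z'.drop (s-1) = [] := by
            apply List.drop_eq_nil_of_le; omega
          have ht0 : z'.take (z'.length + 1 - s) = [] := by
            have : z'.length + 1 - s = 0 := by omega
            simp [this]
          have ht1 : (c :: z').take (z'.length + 1 + 1 - s) = [] := by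
            have : z'.length + 1 + 1 - s = 0 := by omega
            simp [this]
          simp only [List.length_cons]
          rw [hdrop, hd2, ht0, ht1]
          split_ifs <;> omega

lemma Nocc_snoc' (s : ℕ) (hs : 1 ≤ s) (z w : List Bool) (a : Bool) :
    Nocc s w (z ++ [a]) = Nocc s w z +
      (if w.getLast? = some a then Nocc s w.dropLast (z.take (z.length + 1 - s)) else 0) :=
  Nocc_snoc s hs z.length z le_rfl w a

/-- All-zero string. -/
abbrev rp (t : ℕ) : List Bool := List.replicate t false

/-- Zero-padded string. -/
def pxy (i j : ℕ) (Z : List Bool) : List Bool := rp i ++ (Z ++ rp j)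

lemma lemA (s k : ℕ) (v v' : List Bool)
    (hv : ∀ t, t ≤ s-1 → ∀ β : List Bool, β.length ≤ k →
       Nocc s β (rp t ++ v) = Nocc s β (rp t ++ v')) :
    ∀ n (u : List Bool), u.length ≤ n → ∀ w : List Bool, w.length ≤ k+1 →
      Nocc s w (u ++ (rp (s-1) ++ v)) + Nocc s w (rp (s-1) ++ v')
      = Nocc s w (u ++ (rp (s-1) ++ v')) + Nocc s w (rp (s-1) ++ v) := by
  intro n
  induction n with
  | zero =>
    intro u hu w _
    rw [List.length_eq_zero_iff.mp (Nat.le_zero.mp hu)]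
    simp [Nat.add_comm]
  | succ n ih =>
    intro u hu w hw
    cases u with
    | nil => simp [Nat.add_comm]
    | cons c u' =>
      have hu' : u'.length ≤ n := by simpa using hu
      cases w with
      | nil => simp
      | cons b w₂ =>
        have hw₂ : w₂.length ≤ k := by simpa using hw
        simp only [List.cons_append, Nocc_cons]
        have IH1 := ih u' hu' (b :: w₂) hw
        by_cases hcase : s - 1 ≤ u'.length
        · have hdrop : ∀ x : List Bool, (u' ++ (rp (s-1) ++ x)).drop (s-1)
              = u'.drop (s-1) ++ (rp (s-1) ++ x) := fun x =>
            List.drop_append_of_le_length hcase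
          rw [hdrop v, hdrop v']
          have IH2 := ih (u'.drop (s-1)) (le_trans (by simp) hu') w₂
            (le_trans hw₂ (Nat.le_succ k))
          have hvv := hv (s-1) le_rfl w₂ hw₂
          split_ifs <;> omega
        · push_neg at hcase
          have hdrop : ∀ x : List Bool, (u' ++ (rp (s-1) ++ x)).drop (s-1)
              = rp u'.length ++ x := by
            intro x
            have h1 : s - 1 = u'.length + (s - 1 - u'.length) := by omega
            rw [h1, List.drop_append]
            rw [List.drop_append_of_le_length (by rw [List.length_replicate]; omega)]
            rw [List.drop_replicate]
            simp
          rw [hdrop v, hdrop v']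
          have hvv := hv u'.length (by omega) w₂ hw₂
          split_ifs <;> omega

lemma lemB (s k : ℕ) (hs : 2 ≤ s) (u u' : List Bool) (hlen : u.length = u'.length)
    (hu : ∀ t, t ≤ s-1 → ∀ α : List Bool, α.length ≤ k →
       Nocc s α (u ++ rp t) = Nocc s α (u' ++ rp t)) :
    ∀ n (v : List Bool), v.length ≤ n → ∀ w : List Bool, w.length ≤ k+1 →
      Nocc s w ((u ++ rp (s-1)) ++ v) + Nocc s w (u' ++ rp (s-1))
      = Nocc s w ((u' ++ rp (s-1)) ++ v) + Nocc s w (u ++ rp (s-1)) := by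
  intro n
  induction n with
  | zero =>
    intro v hv w _
    rw [List.length_eq_zero_iff.mp (Nat.le_zero.mp hv)]
    simp [Nat.add_comm]
  | succ n ih =>
    intro v hv w hw
    rcases List.eq_nil_or_concat' v with rfl | ⟨z, a, rfl⟩
    · simp [Nat.add_comm]
    · have hz : z.length ≤ n := by
        have := hv; simp only [List.length_append, List.length_cons] at this; omega
      rw [← List.append_assoc (u ++ rp (s-1)) z [a], ← List.append_assoc (u' ++ rp (s-1)) z [a]]
      rw [Nocc_snoc' s (by omega) _ w a, Nocc_snoc' s (by omega) _ w a]
      have hT : ∀ x : List Bool, x.length = u.length →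
          ((x ++ rp (s-1)) ++ z).length + 1 - s = u.length + z.length := by
        intro x hx; simp [hx]; omega
      have hwd : w.dropLast.length ≤ k := by
        rcases w with _ | ⟨b, w'⟩
        · simp
        · simp only [List.length_dropLast, List.length_cons] at *; omega
      by_cases hcase : s - 1 ≤ z.length
      · have htake : ∀ x : List Bool, x.length = u.length →
            ((x ++ rp (s-1)) ++ z).take (((x ++ rp (s-1)) ++ z).length + 1 - s)
            = (x ++ rp (s-1)) ++ z.take (z.length - (s-1)) := by
          intro x hx
          rw [hT x hx]
          have h2 : u.length + z.length = (x ++ rp (s-1)).length + (z.length - (s-1)) := by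
            simp [hx]; omega
          rw [h2, List.take_length_add_append]
        rw [htake u rfl, htake u' hlen.symm]
        have IH1 := ih z hz w hw
        have IH2 := ih (z.take (z.length - (s-1)))
          (le_trans (by simp) hz) w.dropLast (le_trans hwd (Nat.le_succ k))
        have huu := hu (s-1) le_rfl w.dropLast hwd
        split_ifs <;> omega
      · push_neg at hcase
        have htake : ∀ x : List Bool, x.length = u.length →
            ((x ++ rp (s-1)) ++ z).take (((x ++ rp (s-1)) ++ z).length + 1 - s)
            = x ++ rp z.length := by
          intro x hx
          rw [hT x hx, List.append_assoc]
          have h2 : u.length + z.length = x.length + z.length := by rw [hx]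
          rw [h2, List.take_length_add_append]
          congr 1
          rw [List.take_append_of_le_length (by simp; omega), List.take_replicate]
          congr 1
          omega
        rw [htake u rfl, htake u' hlen.symm]
        have IH1 := ih z hz w hw
        have huu := hu z.length (by omega) w.dropLast hwd
        split_ifs <;> omega

section Pads
variable (s k : ℕ) (X Y : List Bool)

lemma padR (hs : 2 ≤ s)
    (Qk : ∀ i j (β : List Bool), β.length ≤ k → Nocc s β (pxy i j X) = Nocc s β (pxy i j Y)) :
    ∀ (w : List Bool), w.length ≤ k+1 → ∀ i j, s-1 ≤ j →
      Nocc s w (pxy i (j+1) X) + Nocc s w (pxy i j Y)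
      = Nocc s w (pxy i (j+1) Y) + Nocc s w (pxy i j X) := by
  intro w hw i j hj
  have hsnoc : ∀ Z : List Bool, pxy i (j+1) Z = (pxy i j Z) ++ [false] := by
    intro Z
    simp [pxy, List.replicate_succ', ← List.append_assoc]
  have htake : ∀ Z : List Bool,
      (pxy i j Z).take ((pxy i j Z).length + 1 - s) = pxy i (j+1-s) Z := by
    intro Z
    have hL : (pxy i j Z).length + 1 - s = i + (Z.length + (j+1-s)) := by
      simp [pxy]; omega
    rw [hL]
    have h1 : i + (Z.length + (j+1-s)) = (rp i).length + (Z.length + (j+1-s)) := by simp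
    rw [pxy, h1, List.take_length_add_append]
    rw [List.take_length_add_append]
    simp [pxy, List.take_replicate]
    omega
  have hwd : w.dropLast.length ≤ k := by
    rcases w with _ | ⟨b, w'⟩
    · simp
    · simp only [List.length_dropLast, List.length_cons] at *; omega
  rw [hsnoc X, hsnoc Y, Nocc_snoc' s (by omega) _ w false, Nocc_snoc' s (by omega) _ w false,
    htake X, htake Y]
  have hQ := Qk i (j+1-s) w.dropLast hwd
  split_ifs <;> omega

lemma padL (hs : 2 ≤ s)
    (Qk : ∀ i j (β : List Bool), β.length ≤ k → Nocc s β (pxy i j X) = Nocc s β (pxy i j Y)) :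
    ∀ (w : List Bool), w.length ≤ k+1 → ∀ i j, s-1 ≤ i →
      Nocc s w (pxy (i+1) j X) + Nocc s w (pxy i j Y)
      = Nocc s w (pxy (i+1) j Y) + Nocc s w (pxy i j X) := by
  intro w hw i j hi
  have hcons : ∀ Z : List Bool, pxy (i+1) j Z = false :: pxy i j Z := by
    intro Z
    simp [pxy, List.replicate_succ]
  have hdrop : ∀ Z : List Bool, (pxy i j Z).drop (s-1) = pxy (i-(s-1)) j Z := by
    intro Z
    rw [pxy, pxy]
    rw [List.drop_append_of_le_length (by simp; omega), List.drop_replicate]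
  cases w with
  | nil => simp
  | cons b w₂ =>
    have hw₂ : w₂.length ≤ k := by simpa using hw
    rw [hcons X, hcons Y, Nocc_cons, Nocc_cons, hdrop X, hdrop Y]
    have hQ := Qk (i-(s-1)) j w₂ hw₂
    split_ifs <;> omega

lemma PIfull (hs : 2 ≤ s)
    (Qk : ∀ i j (β : List Bool), β.length ≤ k → Nocc s β (pxy i j X) = Nocc s β (pxy i j Y)) :
    ∀ (w : List Bool), w.length ≤ k+1 → ∀ i j i' j', s-1 ≤ i → s-1 ≤ j → s-1 ≤ i' → s-1 ≤ j' →
      Nocc s w (pxy i j X) + Nocc s w (pxy i' j' Y)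
      = Nocc s w (pxy i j Y) + Nocc s w (pxy i' j' X) := by
  intro w hw
  have hj : ∀ i j, s-1 ≤ j →
      Nocc s w (pxy i j X) + Nocc s w (pxy i (s-1) Y)
      = Nocc s w (pxy i j Y) + Nocc s w (pxy i (s-1) X) := by
    intro i j hjj
    obtain ⟨d, rfl⟩ : ∃ d, j = (s-1) + d := ⟨j - (s-1), by omega⟩
    clear hjj
    induction d with
    | zero => simp only [Nat.add_zero]; omega
    | succ d ihd =>
      have hstep := padR s k X Y hs Qk w hw i ((s-1)+d) (by omega)
      have : (s-1) + (d+1) = ((s-1)+d) + 1 := by omega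
      rw [this]
      omega
  have hij : ∀ i j, s-1 ≤ i → s-1 ≤ j →
      Nocc s w (pxy i j X) + Nocc s w (pxy (s-1) (s-1) Y)
      = Nocc s w (pxy i j Y) + Nocc s w (pxy (s-1) (s-1) X) := by
    intro i j hii hjj
    have h1 := hj i j hjj
    obtain ⟨d, rfl⟩ : ∃ d, i = (s-1) + d := ⟨i - (s-1), by omega⟩
    clear hii
    induction d with
    | zero => simp only [Nat.add_zero] at h1 ⊢; omega
    | succ d ihd =>
      have hstep := padL s k X Y hs Qk w hw ((s-1)+d) (s-1) (by omega)
      have h2 := hj ((s-1)+d) j hjj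
      have h3 := hj ((s-1)+d+1) j hjj
      have : (s-1) + (d+1) = ((s-1)+d) + 1 := by omega
      rw [this] at h1 ⊢
      omega
  intro i j i' j' hi hjx hi' hj'
  have h1 := hij i j hi hjx
  have h2 := hij i' j' hi' hj'
  omega
end Pads

lemma master (s k : ℕ) (hs : 2 ≤ s) (X Y : List Bool) (hlen : X.length = Y.length)
    (Qk : ∀ i j (β : List Bool), β.length ≤ k → Nocc s β (pxy i j X) = Nocc s β (pxy i j Y)) :
    ∀ i j (w : List Bool), w.length ≤ k+1 →
      Nocc s w (pxy i j (rp (s-1) ++ (X ++ (rp (3*s-2) ++ (Y ++ rp (s-1)))))) =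
      Nocc s w (pxy i j (rp (s-1) ++ (Y ++ (rp (3*s-2) ++ (X ++ rp (s-1)))))) := by
  intro i j w hw
  have hra : rp (i + (s-1)) = rp i ++ rp (s-1) := List.replicate_add i (s-1) false
  have hrm : rp (3*s-2) = rp (2*s-1) ++ rp (s-1) := by
    have h : 3*s-2 = (2*s-1) + (s-1) := by omega
    rw [h]; exact List.replicate_add _ _ false
  have hrb : rp ((s-1) + j) = rp (s-1) ++ rp j := List.replicate_add _ _ false
  have h1 := lemA s k (Y ++ rp ((s-1)+j)) (X ++ rp ((s-1)+j))
    (by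
      intro t ht β hβ
      have := Qk t ((s-1)+j) β hβ
      simp only [pxy] at this
      omega)
    (rp (i+(s-1)) ++ (X ++ rp (2*s-1))).length _ le_rfl w hw
  have h2 := lemB s k hs (rp (i+(s-1)) ++ (X ++ rp (2*s-1))) (rp (i+(s-1)) ++ (Y ++ rp (2*s-1)))
    (by simp [hlen])
    (by
      intro t ht α hα
      have := Qk (i+(s-1)) (2*s-1+t) α hα
      have hmerge : ∀ Z : List Bool, (rp (i+(s-1)) ++ (Z ++ rp (2*s-1))) ++ rp t
          = pxy (i+(s-1)) (2*s-1+t) Z := by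
        intro Z
        simp only [pxy, List.append_assoc, ← List.replicate_add]
      rw [hmerge X, hmerge Y]
      exact this)
    (X ++ rp ((s-1)+j)).length _ le_rfl w hw
  have h3 := PIfull s k X Y hs Qk w hw (i+(s-1)) (3*s-2) (s-1) ((s-1)+j)
    (by omega) (by omega) (by omega) (by omega)
  simp only [pxy, hra, hrm, hrb, List.append_assoc] at h1 h2 h3 ⊢
  omega

lemma Nocc_single (s : ℕ) (b : Bool) : ∀ x : List Bool, Nocc s [b] x = x.count b := by
  intro x
  induction x with
  | nil => simp
  | cons a l ih =>
    rw [Nocc_cons]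
    simp only [Nocc_nil, ih]
    cases b <;> cases a <;> simp [List.count_cons]

/-- The recursive construction of the pair of strings. -/
def XS (s : ℕ) : ℕ → List Bool × List Bool
  | 0 => ([false, true], [true, false])
  | m+1 =>
    (rp (s-1) ++ ((XS s m).1 ++ (rp (3*s-2) ++ ((XS s m).2 ++ rp (s-1)))),
     rp (s-1) ++ ((XS s m).2 ++ (rp (3*s-2) ++ ((XS s m).1 ++ rp (s-1)))))

lemma XS_len (s : ℕ) : ∀ m, (XS s m).1.length = (XS s m).2.length := by
  intro m
  induction m with
  | zero => rfl
  | succ m ih => simp [XS, ih]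

lemma XS_len_eq (s : ℕ) (hs : 2 ≤ s) : ∀ m, (XS s m).1.length = (5*s-2)*2^m + 4 - 5*s := by
  intro m
  induction m with
  | zero =>
    show ([false, true] : List Bool).length = _
    simp
    omega
  | succ m ih =>
    have h1 : (XS s m).2.length = (5*s-2)*2^m + 4 - 5*s := (XS_len s m) ▸ ih
    have hA : 5*s-2 ≤ (5*s-2)*2^m :=
      Nat.le_mul_of_pos_right _ (Nat.pow_pos (n := m) (by omega))
    have hB : (5*s-2)*2^(m+1) = 2*((5*s-2)*2^m) := by ring
    simp only [XS, List.length_append, List.length_replicate, ih, h1]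
    omega

lemma XS_ne (s : ℕ) (hs : 2 ≤ s) : ∀ m, (XS s m).1 ≠ (XS s m).2 := by
  intro m
  induction m with
  | zero => simp [XS]
  | succ m ih =>
    intro h
    simp only [XS] at h
    have h2 := List.append_cancel_left h
    have h3 := List.append_inj_left h2 (XS_len s m)
    exact ih h3

lemma XS_inv (s : ℕ) (hs : 2 ≤ s) : ∀ m, ∀ i j (β : List Bool), β.length ≤ m+1 →
    Nocc s β (pxy i j (XS s m).1) = Nocc s β (pxy i j (XS s m).2) := by
  intro m
  induction m with
  | zero =>
    intro i j β hβ
    match β, hβ with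
    | [], _ => simp
    | [b], _ =>
      rw [Nocc_single, Nocc_single]
      show (pxy i j [false, true]).count b = (pxy i j [true, false]).count b
      simp only [pxy, List.count_append]
      cases b <;> simp
  | succ m ih =>
    intro i j β hβ
    exact master s (m+1) hs (XS s m).1 (XS s m).2 (XS_len s m) ih i j β hβ

/-- For every `s ≥ 2` and `k ≥ 1` there are two distinct binary
strings of length `(5s-2)·2^(k-1) - 5s + 4` with the same `s`-gapped `k`-deck;
i.e. `G_s(k) ≤ (5s-2)·2^(k-1) - 5s + 4`. -/
theorem stmt10 (s k : ℕ) (hs : 2 ≤ s) (hk : 1 ≤ k) :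
    (∃ x y : List Bool, x.length = (5 * s - 2) * 2 ^ (k - 1) + 4 - 5 * s ∧
      y.length = (5 * s - 2) * 2 ^ (k - 1) + 4 - 5 * s ∧ x ≠ y ∧
      gDeck s k x = gDeck s k y) ∧
    Gs s k ≤ (5 * s - 2) * 2 ^ (k - 1) + 4 - 5 * s := by
  have hs1 : 1 ≤ s := by omega
  set m := k - 1 with hm
  have hk1 : k = m + 1 := by omega
  set X := (XS s m).1 with hX
  set Y := (XS s m).2 with hY
  have hA : 5*s-2 ≤ (5*s-2)*2^m :=
    Nat.le_mul_of_pos_right _ (Nat.pow_pos (n := m) (by omega))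
  have hlenX : X.length = (5 * s - 2) * 2 ^ (k - 1) + 4 - 5 * s := XS_len_eq s hs m
  have hlenY : Y.length = (5 * s - 2) * 2 ^ (k - 1) + 4 - 5 * s := by
    rw [← XS_len s m]; exact hlenX
  have hne : X ≠ Y := XS_ne s hs m
  have hdeck : gDeck s k X = gDeck s k Y := by
    unfold gDeck
    refine Multiset.ext.mpr (fun w => ?_)
    rw [Multiset.count_filter, Multiset.count_filter]
    split
    · next hp =>
      rw [count_gapped s X.length X le_rfl w, count_gapped s Y.length Y le_rfl w]
      have h0 : ∀ Z : List Bool, pxy 0 0 Z = Z := by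
        intro Z; simp [pxy]
      have := XS_inv s hs m 0 0 w (by rw [← hk1]; exact hp.2)
      rwa [h0, h0] at this
    · rfl
  refine ⟨⟨X, Y, hlenX, hlenY, hne, hdeck⟩, ?_⟩
  apply Nat.sInf_le
  exact ⟨by omega, X, Y, hlenX, hlenY, hne, hdeck⟩
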